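/- For a real normed space X the following conditions are equivalent: (1) X endowed with its weak topology is k-metrizable; (2) X endowed with its weak topology is cs-metrizable; (3) X has the Schur property, i.e. every sequence in X converging to a point x in the weak topology converges to x in norm. -/

import Mathlib

/-!
A Schur space is k- and cs-metrizable through the identity map from the norm topology: weakly
convergent sequences converge in norm, and weakly compact sets are weakly sequentially compact,
because on the separable closed span of a sequence countably many functionals separate points,
which makes the weakly compact subsets of that span metrizable.

Conversely, if the Schur property fails there is a weakly null sequence `u` with `ε ≤ ‖u n‖`. The
rows `m ↦ n • u m` of the fan all converge weakly to `0`, but no diagonal subsequence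
`k ↦ σ k • u (m k)` converges weakly: it is unbounded in norm, while weakly convergent sequences are
bounded by Banach–Steinhaus. In a cs- or k-metrizable space every such fan has a convergent
diagonal subsequence, found by lifting the fan to the metric space and diagonalizing there.
-/

open Filter Topology Set

universe u

/-- A Hausdorff space `X` is cs-metrizable if it is the image of a metrizable space
under a continuous surjection admitting a sequentially continuous section. -/
def CsMetrizable (X : Type u) [TopologicalSpace X] : Prop :=
  ∃ (M : Type u) (_ : MetricSpace M) (f : M → X) (s : X → M),
    Continuous f ∧ Function.Surjective f ∧ (∀ x, f (s x) = x) ∧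
    ∀ (x : ℕ → X) (a : X), Tendsto x atTop (𝓝 a) →
      ∃ m : M, Tendsto (fun n => s (x n)) atTop (𝓝 m)

/-- A Hausdorff space `X` is k-metrizable if it is the image of a metrizable space
under a continuous surjection for which preimages of compact sets are compact. -/
def KMetrizable (X : Type u) [TopologicalSpace X] : Prop :=
  ∃ (M : Type u) (_ : MetricSpace M) (f : M → X),
    Continuous f ∧ Function.Surjective f ∧
    ∀ K : Set X, IsCompact K → IsCompact (f ⁻¹' K)

/-- The weak topology on a real normed space `X`: the coarsest topology making every
continuous linear functional on `X` continuous. -/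
def weakTopology (X : Type u) [NormedAddCommGroup X] [NormedSpace ℝ X] :
    TopologicalSpace X :=
  ⨅ φ : StrongDual ℝ X, TopologicalSpace.induced (⇑φ) inferInstance

local notation "𝓝ʷ" => @nhds _ (weakTopology _)

section GeneralTopology

variable {Z M : Type*} [TopologicalSpace Z]

theorem exists_tendsto_diagonal [PseudoMetricSpace M] {p : ℕ → ℕ → M} {q : ℕ → M} {r : M}
    (hp : ∀ n, Tendsto (p n) atTop (𝓝 (q n))) (hq : Tendsto q atTop (𝓝 r)) :
    ∃ m : ℕ → ℕ, Tendsto (fun n => p n (m n)) atTop (𝓝 r) := by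
  have h (n : ℕ) : ∃ m, dist (p n m) (q n) < 1 / ((n : ℝ) + 1) :=
    ((hp n).eventually (Metric.ball_mem_nhds _ Nat.one_div_pos_of_nat)).exists
  choose m hm using h
  refine ⟨m, hq.congr_dist <| squeeze_zero (fun _ => dist_nonneg) (fun n => ?_)
    tendsto_one_div_add_atTop_nhds_zero_nat⟩
  rw [dist_comm]
  exact (hm n).le

theorem seqContinuous_of_forall_exists_tendsto [TopologicalSpace M] [T2Space M] {s : Z → M}
    (hs : ∀ (x : ℕ → Z) (a : Z), Tendsto x atTop (𝓝 a) →
      ∃ m, Tendsto (fun n => s (x n)) atTop (𝓝 m)) :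
    SeqContinuous s := by
  intro x a hx
  -- interleave `x` with the constant sequence `a`: both halves of `s ∘ v` share one limit
  let v : ℕ → Z := fun k => if Even k then x (k / 2) else a
  have hv : Tendsto v atTop (𝓝 a) :=
    ((hx.comp (Nat.tendsto_div_const_atTop two_ne_zero)).mono_left inf_le_left).if
      (tendsto_const_nhds.mono_left inf_le_left)
  obtain ⟨m, hm⟩ := hs v a hv
  have hodd : Tendsto (fun k => s (v (2 * k + 1))) atTop (𝓝 m) :=
    hm.comp (strictMono_nat_of_lt_succ fun k => by omega).tendsto_atTop
  have heven : Tendsto (fun k => s (v (2 * k))) atTop (𝓝 m) :=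
    hm.comp (strictMono_nat_of_lt_succ fun k => by omega).tendsto_atTop
  simp only [v, Nat.not_even_two_mul_add_one, even_two_mul, if_true, if_false,
    Nat.mul_div_cancel_left _ two_pos] at hodd heven
  rwa [← tendsto_nhds_unique tendsto_const_nhds hodd] at heven

theorem exists_subseq_tendsto_of_tendsto_comp [TopologicalSpace M] [FirstCountableTopology M]
    [T2Space Z] {f : M → Z} (hf : Continuous f)
    (hfK : ∀ K : Set Z, IsCompact K → IsCompact (f ⁻¹' K)) {q : ℕ → M} {a : Z}
    (hq : Tendsto (fun n => f (q n)) atTop (𝓝 a)) :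
    ∃ b, f b = a ∧ ∃ σ : ℕ → ℕ, StrictMono σ ∧ Tendsto (q ∘ σ) atTop (𝓝 b) := by
  obtain ⟨b, -, σ, hσ, hb⟩ := (hfK _ hq.isCompact_insert_range).tendsto_subseq
    (x := q) fun n => mem_insert_of_mem _ ⟨n, rfl⟩
  exact ⟨b, tendsto_nhds_unique ((hf.tendsto b).comp hb) (hq.comp hσ.tendsto_atTop), σ, hσ, hb⟩

theorem IsCompact.isSeqCompact_of_separating {K : Set Z} (hK : IsCompact K) {g : ℕ → Z → ℝ}
    (hg : ∀ j, Continuous (g j)) (hsep : ∀ a ∈ K, ∀ b ∈ K, (∀ j, g j a = g j b) → a = b) :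
    IsSeqCompact K := by
  have : CompactSpace K := isCompact_iff_compactSpace.1 hK
  have : TopologicalSpace.MetrizableSpace K :=
    Metric.PiNatEmbed.TopologicalSpace.MetrizableSpace.of_countable_separating
      (fun j (z : K) => g j z) (fun j => (hg j).comp continuous_subtype_val) fun a b hab => by
        contrapose! hab
        exact Subtype.ext (hsep a a.2 b b.2 hab)
  exact isSeqCompact_iff_seqCompactSpace.2 inferInstance

end GeneralTopology

section Metrizable

variable {Z : Type u} [TopologicalSpace Z] {x : ℕ → ℕ → Z} {y : ℕ → Z} {z : Z}

theorem CsMetrizable.exists_tendsto_diagonal (h : CsMetrizable Z)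
    (hx : ∀ n, Tendsto (x n) atTop (𝓝 (y n))) (hy : Tendsto y atTop (𝓝 z)) :
    ∃ m : ℕ → ℕ, Tendsto (fun n => x n (m n)) atTop (𝓝 z) := by
  obtain ⟨M, _, f, s, hf, -, hfs, hs⟩ := h
  have hsc := seqContinuous_of_forall_exists_tendsto hs
  obtain ⟨m, hm⟩ := _root_.exists_tendsto_diagonal (fun n => hsc (hx n)) (hsc hy)
  exact ⟨m, by simpa only [Function.comp_def, hfs] using (hf.tendsto _).comp hm⟩

theorem KMetrizable.exists_tendsto_diagonal [T2Space Z] (h : KMetrizable Z)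
    (hx : ∀ n, Tendsto (x n) atTop (𝓝 (y n))) (hy : Tendsto y atTop (𝓝 z)) :
    ∃ σ m : ℕ → ℕ, StrictMono σ ∧ Tendsto (fun k => x (σ k) (m k)) atTop (𝓝 z) := by
  obtain ⟨M, _, f, hf, hsurj, hfK⟩ := h
  choose p hp using fun n m => hsurj (x n m)
  have hrow (n : ℕ) : ∃ q, f q = y n ∧ ∃ ψ : ℕ → ℕ, StrictMono ψ ∧
      Tendsto (p n ∘ ψ) atTop (𝓝 q) :=
    exists_subseq_tendsto_of_tendsto_comp hf hfK (by simpa only [hp] using hx n)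
  choose q hq ψ _ hpq using hrow
  obtain ⟨r, hr, σ, hσ, hqr⟩ :=
    exists_subseq_tendsto_of_tendsto_comp hf hfK (q := q) (by simpa only [hq] using hy)
  obtain ⟨j, hj⟩ := _root_.exists_tendsto_diagonal (fun k => hpq (σ k)) hqr
  refine ⟨σ, fun k => ψ (σ k) (j k), hσ, ?_⟩
  simpa only [Function.comp_def, hp, hr] using (hf.tendsto r).comp hj

end Metrizable

section WeakTopology

variable {X : Type u} [NormedAddCommGroup X] [NormedSpace ℝ X]

theorem continuous_weakTopology_dual (φ : StrongDual ℝ X) : Continuous[weakTopology X, _] φ :=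
  continuous_iInf_dom continuous_induced_dom

theorem tendsto_weakTopology_iff {ι : Type*} {l : Filter ι} {x : ι → X} {a : X} :
    Tendsto x l (𝓝ʷ a) ↔ ∀ φ : StrongDual ℝ X, Tendsto (fun i => φ (x i)) l (𝓝 (φ a)) := by
  rw [weakTopology, nhds_iInf, tendsto_iInf]
  simp only [nhds_induced, tendsto_comap_iff]
  rfl

theorem continuous_id_weakTopology : Continuous[_, weakTopology X] id :=
  continuous_iInf_rng.2 fun φ => continuous_induced_rng.2 φ.continuous

theorem t2Space_weakTopology : @T2Space X (weakTopology X) :=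
  @T2Space.of_injective_continuous _ _ (weakTopology X) _ _
    (f := fun x (φ : StrongDual ℝ X) => φ x)
    (fun _ _ h => (SeparatingDual.eq_iff_forall_dual_eq (R := ℝ)).2 (congrFun h))
    (@continuous_pi _ _ _ (weakTopology X) _ _ continuous_weakTopology_dual)

theorem Convex.isClosed_weakTopology {s : Set X} (hs : Convex ℝ s) (hsc : IsClosed s) :
    IsClosed[weakTopology X] s := by
  refine (@isOpen_compl_iff X s (weakTopology X)).1 <|
    (@isOpen_iff_forall_mem_open X (weakTopology X) _).2 fun a ha => ?_
  obtain ⟨φ, c, hφs, hφa⟩ := geometric_hahn_banach_closed_point hs hsc ha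
  exact ⟨{z | c < φ z}, fun z hz hzs => (hφs z hzs).not_gt hz,
    @isOpen_lt _ _ _ _ _ (weakTopology X) _ _ (@continuous_const _ _ (weakTopology X) _ _)
      (continuous_weakTopology_dual φ), hφa⟩

open NormedSpace in
theorem exists_norm_le_of_tendsto_weakTopology {x : ℕ → X} {a : X}
    (hx : Tendsto x atTop (𝓝ʷ a)) : ∃ C, ∀ n, ‖x n‖ ≤ C := by
  have hbdd (φ : StrongDual ℝ X) : ∃ C, ∀ n, ‖inclusionInDoubleDual ℝ X (x n) φ‖ ≤ C := by
    obtain ⟨C, hC⟩ := (tendsto_weakTopology_iff.1 hx φ).norm.bddAbove_range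
    exact ⟨C, fun n => hC ⟨n, rfl⟩⟩
  obtain ⟨C, hC⟩ := banach_steinhaus hbdd
  exact ⟨C, fun n => (inclusionInDoubleDualLi ℝ).norm_map (x n) ▸ hC n⟩

end WeakTopology

def HasSchurProperty (X : Type u) [NormedAddCommGroup X] [NormedSpace ℝ X] : Prop :=
  ∀ (x : ℕ → X) (a : X), Tendsto x atTop (𝓝ʷ a) → Tendsto x atTop (𝓝 a)

section Schur

variable {X : Type u} [NormedAddCommGroup X] [NormedSpace ℝ X]

theorem exists_weakly_null_of_not_hasSchurProperty (h : ¬ HasSchurProperty X) :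
    ∃ (u : ℕ → X) (ε : ℝ), 0 < ε ∧ (∀ n, ε ≤ ‖u n‖) ∧ Tendsto u atTop (𝓝ʷ 0) := by
  simp only [HasSchurProperty, not_forall] at h
  obtain ⟨x, a, hxa, hnorm⟩ := h
  obtain ⟨ε, hε, hfreq⟩ : ∃ ε > 0, ∃ᶠ n in atTop, ε ≤ dist (x n) a := by
    simpa [Metric.tendsto_atTop, frequently_atTop] using hnorm
  obtain ⟨σ, hσ, hσε⟩ := extraction_of_frequently_atTop hfreq
  refine ⟨fun n => x (σ n) - a, ε, hε, fun n => by simpa [dist_eq_norm] using hσε n, ?_⟩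
  rw [tendsto_weakTopology_iff] at hxa ⊢
  intro φ
  simpa using ((hxa φ).comp hσ.tendsto_atTop).sub_const (φ a)

theorem exists_weak_fan_of_not_hasSchurProperty (h : ¬ HasSchurProperty X) :
    ∃ x : ℕ → ℕ → X, (∀ n, Tendsto (x n) atTop (𝓝ʷ 0)) ∧
      ∀ σ m : ℕ → ℕ, StrictMono σ → ¬ Tendsto (fun k => x (σ k) (m k)) atTop (𝓝ʷ 0) := by
  obtain ⟨u, ε, hε, hεu, hu⟩ := exists_weakly_null_of_not_hasSchurProperty h
  refine ⟨fun n m => (n : ℝ) • u m, fun n => ?_, fun σ m hσ hdiag => ?_⟩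
  · rw [tendsto_weakTopology_iff] at hu ⊢
    intro φ
    simpa using (hu φ).const_mul (n : ℝ)
  · obtain ⟨C, hC⟩ := exists_norm_le_of_tendsto_weakTopology hdiag
    obtain ⟨k, hk⟩ := exists_nat_gt (C / ε)
    have : k * ε ≤ C := calc
      k * ε ≤ σ k * ‖u (m k)‖ :=
        mul_le_mul (by exact_mod_cast hσ.id_le k) (hεu _) hε.le (Nat.cast_nonneg _)
      _ = ‖(σ k : ℝ) • u (m k)‖ := by rw [norm_smul, Real.norm_natCast]
      _ ≤ C := hC k
    rw [div_lt_iff₀ hε] at hk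
    linarith

theorem exists_dual_seq_eq_zero_of_isSeparable {S : Set X}
    (hS : TopologicalSpace.IsSeparable S) :
    ∃ φ : ℕ → StrongDual ℝ X, ∀ z ∈ S, (∀ j, φ j z = 0) → z = 0 := by
  obtain ⟨D, hD, hSD⟩ := hS
  obtain ⟨e, he⟩ := (hD.insert 0).exists_eq_range (insert_nonempty 0 D)
  choose φ hφ1 hφe using fun j => exists_dual_vector'' ℝ (e j)
  refine ⟨φ, fun z hz hφz => ?_⟩
  by_contra hz0
  have hze : z ∈ closure (range e) := he ▸ closure_mono (subset_insert 0 D) (hSD hz)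
  obtain ⟨j, hj⟩ := Metric.mem_closure_range_iff.1 hze (‖z‖ / 2) (by positivity)
  -- `φ j` norms `e j` and vanishes at `z`, so `e j` cannot be close to `z`
  have hej : ‖e j‖ ≤ ‖e j - z‖ := calc
    ‖e j‖ = φ j (e j - z) := by rw [map_sub, hφz j, sub_zero, hφe]; rfl
    _ ≤ ‖φ j (e j - z)‖ := le_abs_self _
    _ ≤ 1 * ‖e j - z‖ := (φ j).le_of_opNorm_le (hφ1 j) _
    _ = ‖e j - z‖ := one_mul _
  have := norm_le_norm_add_norm_sub' z (e j)
  rw [dist_eq_norm] at hj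
  rw [norm_sub_rev] at hej
  linarith [norm_pos_iff.2 hz0]

theorem isSeqCompact_weakTopology_of_isCompact {K : Set X} (hK : @IsCompact X (weakTopology X) K) :
    @IsSeqCompact X (weakTopology X) K := by
  intro x hx
  let Y := (Submodule.span ℝ (range x)).topologicalClosure
  have hxY (n : ℕ) : x n ∈ Y := Submodule.le_topologicalClosure _ (Submodule.subset_span ⟨n, rfl⟩)
  have hYsep : TopologicalSpace.IsSeparable (Y : Set X) := by
    rw [Submodule.topologicalClosure_coe, TopologicalSpace.isSeparable_closure]
    exact (countable_range x).isSeparable.span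
  obtain ⟨φ, hφ⟩ := exists_dual_seq_eq_zero_of_isSeparable hYsep
  have hKY : @IsCompact X (weakTopology X) (K ∩ Y) :=
    @IsCompact.inter_right X (weakTopology X) _ _ hK
      (Y.convex.isClosed_weakTopology (Submodule.isClosed_topologicalClosure _))
  have hsep : ∀ a ∈ K ∩ Y, ∀ b ∈ K ∩ Y, (∀ j, φ j a = φ j b) → a = b := fun a ha b hb hab =>
    sub_eq_zero.1 <| hφ _ (Y.sub_mem ha.2 hb.2) fun j => by rw [map_sub, hab, sub_self]
  have hKYseq := @IsCompact.isSeqCompact_of_separating X (weakTopology X) _ hKY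
    (fun j z => φ j z) (fun j => continuous_weakTopology_dual (φ j)) hsep
  obtain ⟨a, ha, σ, hσ, hxa⟩ := hKYseq fun n => ⟨hx n, hxY n⟩
  exact ⟨a, ha.1, σ, hσ, hxa⟩

theorem HasSchurProperty.kMetrizable (h : HasSchurProperty X) :
    @KMetrizable X (weakTopology X) := by
  refine ⟨X, inferInstance, id, continuous_id_weakTopology, Function.surjective_id, fun K hK => ?_⟩
  refine (show IsSeqCompact K from fun x hx => ?_).isCompact
  obtain ⟨a, ha, σ, hσ, hxa⟩ := isSeqCompact_weakTopology_of_isCompact hK hx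
  exact ⟨a, ha, σ, hσ, h _ a hxa⟩

theorem HasSchurProperty.csMetrizable (h : HasSchurProperty X) :
    @CsMetrizable X (weakTopology X) :=
  ⟨X, inferInstance, id, id, continuous_id_weakTopology, Function.surjective_id, fun _ => rfl,
    fun x a hxa => ⟨a, h x a hxa⟩⟩

theorem KMetrizable.hasSchurProperty (h : @KMetrizable X (weakTopology X)) :
    HasSchurProperty X := by
  by_contra hS
  obtain ⟨x, hx, hdiag⟩ := exists_weak_fan_of_not_hasSchurProperty hS
  obtain ⟨σ, m, hσ, hxσ⟩ := @KMetrizable.exists_tendsto_diagonal X (weakTopology X) _ _ _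
    t2Space_weakTopology h hx (@tendsto_const_nhds X (weakTopology X) ℕ 0 atTop)
  exact hdiag σ m hσ hxσ

theorem CsMetrizable.hasSchurProperty (h : @CsMetrizable X (weakTopology X)) :
    HasSchurProperty X := by
  by_contra hS
  obtain ⟨x, hx, hdiag⟩ := exists_weak_fan_of_not_hasSchurProperty hS
  obtain ⟨m, hxm⟩ := @CsMetrizable.exists_tendsto_diagonal X (weakTopology X) _ _ _ h hx
    (@tendsto_const_nhds X (weakTopology X) ℕ 0 atTop)
  exact hdiag id m strictMono_id hxm

end Schur

/-- For a real normed space `X` the following are equivalent: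
(1) `X` with the weak topology is k-metrizable; (2) `X` with the weak topology is
cs-metrizable; (3) `X` has the Schur property. -/
theorem stmt_18 {X : Type u} [NormedAddCommGroup X] [NormedSpace ℝ X] :
    List.TFAE
      [ @KMetrizable X (weakTopology X),
        @CsMetrizable X (weakTopology X),
        ∀ (x : ℕ → X) (a : X),
          Tendsto x atTop (@nhds X (weakTopology X) a) →
          Tendsto x atTop (𝓝 a) ] := by
  tfae_have 1 → 3 := KMetrizable.hasSchurProperty
  tfae_have 2 → 3 := CsMetrizable.hasSchurProperty
  tfae_have 3 → 1 := HasSchurProperty.kMetrizable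
  tfae_have 3 → 2 := HasSchurProperty.csMetrizable
  tfae_finish
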